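/- Let N ≥ 2 and let E ⊆ {(i,j) : 1 ≤ j < i ≤ N} be the edge set of a DAG on nodes {1,…,N} in topological order, with parents P_i nonempty for every i ≥ 2. Let Ω be lower semicontinuous and strongly convex on probability simplices, so that each maxΩ is differentiable with gradient ∇maxΩ equal to the unique maximizer. Define v₁(θ) = 0 and v_i(θ) = maxΩ((θ_{i,j} + v_j(θ))_{j∈P_i}) for θ ∈ ℝ^E, set q_{i,j}(θ) = (∇maxΩ((θ_{i,k} + v_k(θ))_{k∈P_i}))_j for j ∈ P_i and 0 otherwise, and define ē_N = 1, e_{i,j} = ē_i q_{i,j}, ē_j = Σ_{i ∈ C_j} e_{i,j} in reverse topological order (C_j being the children of j). Then DPΩ(θ) = v_N(θ) is differentiable on ℝ^E and its gradient is ∇DPΩ(θ) = (e_{i,j}(θ))_{(i,j)∈E}. -/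

import Mathlib

/-- The smoothed max operator over a finite index set `ι`:
`smaxF Ω x = sup_{q ∈ Δ^ι} (⟨q, x⟩ - Ω q)`. -/
noncomputable def smaxF {ι : Type} [Fintype ι] (Ω : (ι → ℝ) → ℝ) (x : ι → ℝ) : ℝ :=
  sSup ((fun q => (∑ i, q i * x i) - Ω q) '' stdSimplex ℝ ι)

lemma aux_strong {ι : Type} [Fintype ι] (Ω : (ι → ℝ) → ℝ) (μ : ℝ) (hμ : 0 < μ)
    (hsc : ConvexOn ℝ (stdSimplex ℝ ι) (fun p => Ω p - μ / 2 * ∑ j, (p j) ^ 2))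
    (x q0 : ι → ℝ) (hq0 : q0 ∈ stdSimplex ℝ ι)
    (hmax : IsMaxOn (fun p => (∑ j, p j * x j) - Ω p) (stdSimplex ℝ ι) q0)
    (p : ι → ℝ) (hp : p ∈ stdSimplex ℝ ι) :
    ((∑ j, p j * x j) - Ω p) + μ / 2 * ∑ j, (p j - q0 j) ^ 2
      ≤ (∑ j, q0 j * x j) - Ω q0 := by
  classical
  set A : ℝ := ∑ j, q0 j * (p j - q0 j) with hA
  set B : ℝ := ∑ j, (p j - q0 j) ^ 2 with hB
  have hBnn : 0 ≤ B := by rw [hB]; exact Finset.sum_nonneg fun j _ => sq_nonneg _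
  -- linear part is concave (affine)
  have hconc : ConcaveOn ℝ (stdSimplex ℝ ι) (fun r : ι → ℝ => ∑ j, r j * x j) := by
    refine ⟨convex_stdSimplex ℝ ι, ?_⟩
    intro r hr s hs a b ha hb hab
    apply le_of_eq
    simp only [smul_eq_mul, Pi.add_apply, Pi.smul_apply, smul_eq_mul]
    rw [Finset.mul_sum, Finset.mul_sum, ← Finset.sum_add_distrib]
    exact Finset.sum_congr rfl fun j _ => by ring
  have hg : ConvexOn ℝ (stdSimplex ℝ ι)
      (fun r : ι → ℝ => (Ω r - μ / 2 * ∑ j, (r j) ^ 2) - ∑ j, r j * x j) :=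
    hsc.sub hconc
  -- step inequality for each t
  have hstep : ∀ t : ℝ, 0 < t → t ≤ 1 →
      -(μ * A) - μ * t / 2 * B ≤
        ((Ω p - μ / 2 * ∑ j, (p j) ^ 2) - ∑ j, p j * x j)
          - ((Ω q0 - μ / 2 * ∑ j, (q0 j) ^ 2) - ∑ j, q0 j * x j) := by
    intro t ht ht1
    have hmem : (1 - t) • q0 + t • p ∈ stdSimplex ℝ ι :=
      (convex_stdSimplex ℝ ι) hq0 hp (by linarith) ht.le (by ring)
    have h1 := hmax hmem
    have h2 := hg.2 hq0 hp (by linarith : (0:ℝ) ≤ 1 - t) ht.le (by ring)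
    simp only [Set.mem_setOf_eq, smul_eq_mul] at h1 h2
    set pt : ι → ℝ := (1 - t) • q0 + t • p with hpt
    clear_value pt
    have e1 : μ / 2 * ∑ j, (pt j) ^ 2
        = μ / 2 * ((∑ j, (q0 j) ^ 2) + 2 * t * A + t ^ 2 * B) := by
      congr 1
      rw [hA, hB, Finset.mul_sum, Finset.mul_sum, ← Finset.sum_add_distrib,
        ← Finset.sum_add_distrib]
      refine Finset.sum_congr rfl fun j _ => ?_
      simp only [hpt, Pi.add_apply, Pi.smul_apply, smul_eq_mul]
      ring
    clear_value A B
    have h4 : 0 ≤ t * ((((Ω p - μ / 2 * ∑ j, (p j) ^ 2) - ∑ j, p j * x j)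
          - ((Ω q0 - μ / 2 * ∑ j, (q0 j) ^ 2) - ∑ j, q0 j * x j))
        + μ * A + μ * t / 2 * B) := by
      nlinarith [h1, h2, e1]
    have h5 : t * 0 ≤ t * ((((Ω p - μ / 2 * ∑ j, (p j) ^ 2) - ∑ j, p j * x j)
          - ((Ω q0 - μ / 2 * ∑ j, (q0 j) ^ 2) - ∑ j, q0 j * x j))
        + μ * A + μ * t / 2 * B) := by linarith
    have h6 := le_of_mul_le_mul_left h5 ht
    linarith
  clear_value A B
  -- pass to the limit t → 0
  have hkey : -(μ * A) ≤
      ((Ω p - μ / 2 * ∑ j, (p j) ^ 2) - ∑ j, p j * x j)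
        - ((Ω q0 - μ / 2 * ∑ j, (q0 j) ^ 2) - ∑ j, q0 j * x j) := by
    by_contra hcon
    push_neg at hcon
    rcases eq_or_lt_of_le hBnn with hB0 | hBpos
    · have h7 := hstep 1 one_pos le_rfl
      rw [← hB0] at h7
      simp at h7
      linarith
    · set ε : ℝ := -(μ * A) - (((Ω p - μ / 2 * ∑ j, (p j) ^ 2) - ∑ j, p j * x j)
        - ((Ω q0 - μ / 2 * ∑ j, (q0 j) ^ 2) - ∑ j, q0 j * x j)) with hε
      have hεpos : 0 < ε := by rw [hε]; linarith
      clear_value ε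
      have hμB : 0 < μ * B := mul_pos hμ hBpos
      set t : ℝ := min 1 (ε / (μ * B)) with htdef
      have ht : 0 < t := lt_min one_pos (div_pos hεpos hμB)
      have ht1 : t ≤ 1 := min_le_left _ _
      have ht2 : t ≤ ε / (μ * B) := min_le_right _ _
      clear_value t
      have hbound : μ * t / 2 * B ≤ ε / 2 := by
        have h8 : t * (μ * B) ≤ ε := by
          rw [← le_div_iff₀ hμB]; exact ht2
        nlinarith
      have h9 := hstep t ht ht1
      linarith
  -- conclude
  have e3 : μ / 2 * ∑ j, (p j) ^ 2
      = μ / 2 * ((∑ j, (q0 j) ^ 2) + 2 * A + B) := by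
    congr 1
    rw [hA, hB, Finset.mul_sum, ← Finset.sum_add_distrib, ← Finset.sum_add_distrib]
    refine Finset.sum_congr rfl fun j _ => ?_
    ring
  nlinarith [hkey, e3]

lemma aux_smax_val {ι : Type} [Fintype ι] (Ω : (ι → ℝ) → ℝ) (x q0 : ι → ℝ)
    (hq0 : q0 ∈ stdSimplex ℝ ι)
    (hmax : IsMaxOn (fun p => (∑ j, p j * x j) - Ω p) (stdSimplex ℝ ι) q0) :
    smaxF Ω x = (∑ j, q0 j * x j) - Ω q0 := by
  apply IsGreatest.csSup_eq
  constructor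
  · exact ⟨q0, hq0, rfl⟩
  · rintro y ⟨r, hr, rfl⟩
    exact hmax hr

lemma aux_danskin {ι : Type} [Fintype ι] (Ω : (ι → ℝ) → ℝ) (μ : ℝ) (hμ : 0 < μ)
    (hsc : ConvexOn ℝ (stdSimplex ℝ ι) (fun p => Ω p - μ / 2 * ∑ j, (p j) ^ 2))
    (x1 x2 q1 q2 : ι → ℝ)
    (hq1 : q1 ∈ stdSimplex ℝ ι) (hq2 : q2 ∈ stdSimplex ℝ ι)
    (hmax1 : IsMaxOn (fun p => (∑ j, p j * x1 j) - Ω p) (stdSimplex ℝ ι) q1)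
    (hmax2 : IsMaxOn (fun p => (∑ j, p j * x2 j) - Ω p) (stdSimplex ℝ ι) q2) :
    0 ≤ smaxF Ω x2 - smaxF Ω x1 - ∑ j, q1 j * (x2 j - x1 j) ∧
    smaxF Ω x2 - smaxF Ω x1 - ∑ j, q1 j * (x2 j - x1 j)
      ≤ (1 / μ) * ∑ j, (x2 j - x1 j) ^ 2 := by
  classical
  rw [aux_smax_val Ω x1 q1 hq1 hmax1, aux_smax_val Ω x2 q2 hq2 hmax2]
  have e0 : ∀ r : ι → ℝ, ∑ j, r j * x2 j = (∑ j, r j * x1 j) + ∑ j, r j * (x2 j - x1 j) := by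
    intro r
    rw [← Finset.sum_add_distrib]
    exact Finset.sum_congr rfl fun j _ => by ring
  have hs1 := aux_strong Ω μ hμ hsc x1 q1 hq1 hmax1 q2 hq2
  have hs2 := aux_strong Ω μ hμ hsc x2 q2 hq2 hmax2 q1 hq1
  have h1 : (∑ j, q1 j * x2 j) - Ω q1 ≤ (∑ j, q2 j * x2 j) - Ω q2 := hmax2 hq1
  -- key strong monotonicity : μ * D ≤ s
  have hD : ∑ j, (q2 j - q1 j) ^ 2 = ∑ j, (q1 j - q2 j) ^ 2 :=
    Finset.sum_congr rfl fun j _ => by ring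
  have hkey : μ * ∑ j, (q1 j - q2 j) ^ 2 ≤ ∑ j, (q2 j - q1 j) * (x2 j - x1 j) := by
    have e1 := e0 q1
    have e2 := e0 q2
    have e4 : ∑ j, (q2 j - q1 j) * (x2 j - x1 j)
        = (∑ j, q2 j * (x2 j - x1 j)) - ∑ j, q1 j * (x2 j - x1 j) := by
      rw [← Finset.sum_sub_distrib]
      exact Finset.sum_congr rfl fun j _ => by ring
    rw [hD] at hs1
    linarith
  have hDnn : 0 ≤ ∑ j, (q1 j - q2 j) ^ 2 := Finset.sum_nonneg fun j _ => sq_nonneg _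
  have hs : ∑ j, (q2 j - q1 j) * (x2 j - x1 j) ≤ (1 / μ) * ∑ j, (x2 j - x1 j) ^ 2 := by
    have hcs := Finset.sum_mul_sq_le_sq_mul_sq Finset.univ
      (fun j => q2 j - q1 j) (fun j => x2 j - x1 j)
    have hXnn : 0 ≤ ∑ j, (x2 j - x1 j) ^ 2 := Finset.sum_nonneg fun j _ => sq_nonneg _
    rcases le_or_gt (∑ j, (q2 j - q1 j) * (x2 j - x1 j)) 0 with hneg | hpos
    · calc ∑ j, (q2 j - q1 j) * (x2 j - x1 j) ≤ 0 := hneg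
        _ ≤ (1 / μ) * ∑ j, (x2 j - x1 j) ^ 2 := by positivity
    · rw [← hD] at hkey
      have step1 : μ * ((∑ j, (q2 j - q1 j) * (x2 j - x1 j)) * (∑ j, (q2 j - q1 j) * (x2 j - x1 j)))
          ≤ μ * ((∑ j, (q2 j - q1 j) ^ 2) * ∑ j, (x2 j - x1 j) ^ 2) := by
        have := mul_le_mul_of_nonneg_left hcs hμ.le
        nlinarith [this]
      have step2 : (μ * ∑ j, (q2 j - q1 j) ^ 2) * ∑ j, (x2 j - x1 j) ^ 2
          ≤ (∑ j, (q2 j - q1 j) * (x2 j - x1 j)) * ∑ j, (x2 j - x1 j) ^ 2 :=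
        mul_le_mul_of_nonneg_right hkey hXnn
      have step3 : (∑ j, (q2 j - q1 j) * (x2 j - x1 j)) * (μ * (∑ j, (q2 j - q1 j) * (x2 j - x1 j)))
          ≤ (∑ j, (q2 j - q1 j) * (x2 j - x1 j)) * ∑ j, (x2 j - x1 j) ^ 2 := by
        nlinarith [step1, step2]
      have step4 := le_of_mul_le_mul_left step3 hpos
      rw [← sub_nonneg]
      have heq : 1 / μ * ∑ j, (x2 j - x1 j) ^ 2 - ∑ j, (q2 j - q1 j) * (x2 j - x1 j)
          = (1 / μ) * ((∑ j, (x2 j - x1 j) ^ 2) - μ * ∑ j, (q2 j - q1 j) * (x2 j - x1 j)) := by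
        field_simp
      rw [heq]
      have h10 : (0:ℝ) ≤ 1 / μ := by positivity
      have h11 : 0 ≤ (∑ j, (x2 j - x1 j) ^ 2) - μ * ∑ j, (q2 j - q1 j) * (x2 j - x1 j) := by
        linarith
      exact mul_nonneg h10 h11
  constructor
  · have e1 := e0 q1
    linarith
  · have e1 := e0 q1
    have e2 := e0 q2
    have h2 : (∑ j, q2 j * x1 j) - Ω q2 ≤ (∑ j, q1 j * x1 j) - Ω q1 := hmax1 hq2
    have e4 : ∑ j, (q2 j - q1 j) * (x2 j - x1 j)
        = (∑ j, q2 j * (x2 j - x1 j)) - ∑ j, q1 j * (x2 j - x1 j) := by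
      rw [← Finset.sum_sub_distrib]
      exact Finset.sum_congr rfl fun j _ => by ring
    linarith
lemma aux_sum_dite {α : Type} [Fintype α] {P : α → Prop} [DecidablePred P]
    (f : ∀ b, P b → ℝ) :
    ∑ b : α, (if h : P b then f b h else 0) = ∑ j : {b // P b}, f j.1 j.2 := by
  classical
  rw [← Finset.sum_subset (Finset.filter_subset P Finset.univ)
    (fun x _ hx => by
      rw [Finset.mem_filter] at hx
      push_neg at hx
      exact dif_neg (hx (Finset.mem_univ x)))]
  rw [Finset.sum_subtype (p := P) (Finset.univ.filter P) (fun x => by simp)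
    (fun b => if h : P b then f b h else 0)]
  exact Finset.sum_congr rfl fun j _ => dif_pos j.2

lemma aux_smax_fderiv {ι : Type} [Fintype ι] (Ω : (ι → ℝ) → ℝ) (μ : ℝ) (hμ : 0 < μ)
    (hsc : ConvexOn ℝ (stdSimplex ℝ ι) (fun p => Ω p - μ / 2 * ∑ j, (p j) ^ 2))
    (x0 q0 : ι → ℝ) (hq0 : q0 ∈ stdSimplex ℝ ι)
    (hmax0 : IsMaxOn (fun p => (∑ j, p j * x0 j) - Ω p) (stdSimplex ℝ ι) q0)
    (hex : ∀ y : ι → ℝ, ∃ qy ∈ stdSimplex ℝ ι,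
      IsMaxOn (fun p => (∑ j, p j * y j) - Ω p) (stdSimplex ℝ ι) qy) :
    HasFDerivAt (smaxF Ω)
      (∑ j : ι, (q0 j) • (ContinuousLinearMap.proj j : (∀ _ : ι, ℝ) →L[ℝ] ℝ)) x0 := by
  classical
  rw [hasFDerivAt_iff_isLittleO, Asymptotics.isLittleO_iff]
  intro c hc
  set K : ℝ := (Fintype.card ι : ℝ) + 1 with hK
  have hKpos : 0 < K := by positivity
  have hδ : 0 < c * μ / K := by positivity
  filter_upwards [Metric.ball_mem_nhds x0 hδ] with y hy
  have hdist : ‖y - x0‖ < c * μ / K := by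
    rw [← dist_eq_norm]; exact hy
  have hnn : 0 ≤ ‖y - x0‖ := norm_nonneg _
  obtain ⟨qy, hqy, hmaxy⟩ := hex y
  obtain ⟨hlow, hup⟩ := aux_danskin Ω μ hμ hsc x0 y q0 qy hq0 hqy hmax0 hmaxy
  -- the linear map applied
  have hL : (∑ j : ι, (q0 j) • (ContinuousLinearMap.proj j : (∀ _ : ι, ℝ) →L[ℝ] ℝ)) (y - x0)
      = ∑ j, q0 j * (y j - x0 j) := by
    simp [ContinuousLinearMap.sum_apply, ContinuousLinearMap.proj_apply]
  -- bound on the quadratic term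
  have hsq : ∑ j, (y j - x0 j) ^ 2 ≤ (Fintype.card ι : ℝ) * ‖y - x0‖ ^ 2 := by
    have : ∀ j ∈ Finset.univ, (y j - x0 j) ^ 2 ≤ ‖y - x0‖ ^ 2 := by
      intro j _
      have h1 : |y j - x0 j| ≤ ‖y - x0‖ := by
        have := norm_le_pi_norm (y - x0) j
        simpa [Real.norm_eq_abs] using this
      calc (y j - x0 j) ^ 2 = |y j - x0 j| ^ 2 := (sq_abs _).symm
        _ ≤ ‖y - x0‖ ^ 2 := by
            exact pow_le_pow_left₀ (abs_nonneg _) h1 2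
    calc ∑ j, (y j - x0 j) ^ 2 ≤ Finset.univ.card • ‖y - x0‖ ^ 2 :=
          Finset.sum_le_card_nsmul _ _ _ this
      _ = (Fintype.card ι : ℝ) * ‖y - x0‖ ^ 2 := by
          simp [nsmul_eq_mul, Finset.card_univ]
  rw [hL]
  rw [Real.norm_eq_abs, abs_le]
  constructor
  · have : 0 ≤ c * ‖y - x0‖ := mul_nonneg hc.le hnn
    linarith
  · have h2 : smaxF Ω y - smaxF Ω x0 - ∑ j, q0 j * (y j - x0 j)
        ≤ (1 / μ) * ((Fintype.card ι : ℝ) * ‖y - x0‖ ^ 2) := by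
      refine le_trans hup ?_
      have : (0:ℝ) ≤ 1 / μ := by positivity
      exact mul_le_mul_of_nonneg_left hsq this
    refine le_trans h2 ?_
    have h3 : (1 / μ) * ((Fintype.card ι : ℝ) * ‖y - x0‖ ^ 2)
        ≤ (1 / μ) * (K * (c * μ / K * ‖y - x0‖)) := by
      have hcard : (Fintype.card ι : ℝ) ≤ K := by rw [hK]; linarith
      have b1 : (Fintype.card ι : ℝ) * ‖y - x0‖ ^ 2 ≤ K * ‖y - x0‖ ^ 2 :=
        mul_le_mul_of_nonneg_right hcard (by positivity)
      have b2 : K * ‖y - x0‖ ^ 2 ≤ K * (c * μ / K * ‖y - x0‖) := by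
        have : ‖y - x0‖ ^ 2 ≤ c * μ / K * ‖y - x0‖ := by
          rw [pow_two]
          exact mul_le_mul_of_nonneg_right hdist.le hnn
        exact mul_le_mul_of_nonneg_left this hKpos.le
      have : (0:ℝ) ≤ 1 / μ := by positivity
      exact mul_le_mul_of_nonneg_left (le_trans b1 b2) this
    refine le_trans h3 ?_
    apply le_of_eq
    field_simp
set_option maxHeartbeats 1000000 in
/-- differentiability of the smoothed dynamic program and
computation of its gradient by backpropagation.  On a DAG on the nodes
`{0, …, N-1}` in topological order, with `Ω` lower semicontinuous and strongly
convex on the relevant probability simplices, let `v θ` be computed by the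
smoothed recursion, let `q θ i` be the (unique) maximizer defining
`∇maxΩ` at node `i`, and let `e, ē` be computed by the reverse recursion
`ē_{N} = 1`, `e_{i,j} = ē_i q_{i,j}`, `ē_j = ∑_{i ∈ C_j} e_{i,j}`.  Then
`DPΩ = v · (N-1)` is differentiable with gradient matrix `(e θ i j)_{i,j}`
(supported on the edges).  Here the edge-weight space `ℝ^E` is embedded in the
Euclidean space `ℝ^{(N×N)}`. -/
theorem stmt19 (N : ℕ) (hN : 2 ≤ N)
    (adj : Fin N → Fin N → Prop) [DecidableRel adj]
    (hadj : ∀ i j : Fin N, adj i j → j < i)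
    (hpar : ∀ i : Fin N, i ≠ ⟨0, by omega⟩ → ∃ j, adj i j)
    (Ω : ∀ i : Fin N, ({j : Fin N // adj i j} → ℝ) → ℝ)
    (hlsc : ∀ i : Fin N,
      LowerSemicontinuousOn (Ω i) (stdSimplex ℝ {j : Fin N // adj i j}))
    (μ : ℝ) (hμ : 0 < μ)
    (hsc : ∀ i : Fin N, ConvexOn ℝ (stdSimplex ℝ {j : Fin N // adj i j})
      (fun p => Ω i p - μ / 2 * ∑ j, (p j) ^ 2))
    (v : EuclideanSpace ℝ (Fin N × Fin N) → Fin N → ℝ)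
    (hv0 : ∀ θ, v θ ⟨0, by omega⟩ = 0)
    (hv : ∀ (θ : EuclideanSpace ℝ (Fin N × Fin N)) (i : Fin N), i ≠ ⟨0, by omega⟩ →
      v θ i = smaxF (Ω i) (fun j => θ (i, j.1) + v θ j.1))
    (q : EuclideanSpace ℝ (Fin N × Fin N) → ∀ i : Fin N, {j : Fin N // adj i j} → ℝ)
    (hqmem : ∀ θ (i : Fin N), i ≠ ⟨0, by omega⟩ →
      q θ i ∈ stdSimplex ℝ {j : Fin N // adj i j})
    (hqmax : ∀ θ (i : Fin N), i ≠ ⟨0, by omega⟩ →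
      IsMaxOn (fun p : {j : Fin N // adj i j} → ℝ =>
          (∑ j, p j * (θ (i, j.1) + v θ j.1)) - Ω i p)
        (stdSimplex ℝ {j : Fin N // adj i j}) (q θ i))
    (e : EuclideanSpace ℝ (Fin N × Fin N) → Fin N → Fin N → ℝ)
    (ebar : EuclideanSpace ℝ (Fin N × Fin N) → Fin N → ℝ)
    (hebarN : ∀ θ, ebar θ ⟨N - 1, by omega⟩ = 1)
    (he : ∀ θ (i j : Fin N),
      e θ i j = if h : adj i j then ebar θ i * q θ i ⟨j, h⟩ else 0)
    (hebar : ∀ θ (j : Fin N), j ≠ ⟨N - 1, by omega⟩ → ebar θ j = ∑ i, e θ i j) :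
    ∀ θ : EuclideanSpace ℝ (Fin N × Fin N),
      HasGradientAt (fun θ' => v θ' ⟨N - 1, by omega⟩)
        (show EuclideanSpace ℝ (Fin N × Fin N) from WithLp.toLp 2 (fun p : Fin N × Fin N => e θ p.1 p.2)) θ := by
  classical
  intro θ0
  have hz : 0 < N := by omega
  -- the transition matrix and its Neumann series
  set M : EuclideanSpace ℝ (Fin N × Fin N) → Matrix (Fin N) (Fin N) ℝ :=
    fun θ' i j => if h : adj i j then q θ' i ⟨j, h⟩ else 0 with hM
  set cM : EuclideanSpace ℝ (Fin N × Fin N) → Matrix (Fin N) (Fin N) ℝ :=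
    fun θ' => ∑ n ∈ Finset.range N, (M θ') ^ n with hcM
  have hMval : ∀ θ' (i j : Fin N) (h : adj i j), M θ' i j = q θ' i ⟨j, h⟩ :=
    fun θ' i j h => dif_pos h
  have hMval0 : ∀ θ' (i j : Fin N), ¬ adj i j → M θ' i j = 0 :=
    fun θ' i j h => dif_neg h
  have hMne : ∀ θ' (i j : Fin N), M θ' i j ≠ 0 → j < i := by
    intro θ' i j hne
    by_cases h : adj i j
    · exact hadj i j h
    · exact absurd (dif_neg h) hne
  -- nilpotency
  have hMpow : ∀ θ' (n : ℕ) (i a : Fin N), ((M θ') ^ n) i a ≠ 0 → a.val + n ≤ i.val := by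
    intro θ' n
    induction n with
    | zero =>
      intro i a hne
      rw [pow_zero] at hne
      by_cases h : i = a
      · subst h; omega
      · exact absurd (Matrix.one_apply_ne h) hne
    | succ n IHn =>
      intro i a hne
      rw [pow_succ, Matrix.mul_apply] at hne
      obtain ⟨k, _, hk⟩ := Finset.exists_ne_zero_of_sum_ne_zero hne
      have h1 : ((M θ') ^ n) i k ≠ 0 := fun h => hk (by rw [h, zero_mul])
      have h2 : M θ' k a ≠ 0 := fun h => hk (by rw [h, mul_zero])
      have h3 := IHn i k h1
      have h4 := hMne θ' k a h2
      have : a.val < k.val := h4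
      omega
  have hMN : ∀ θ', (M θ') ^ N = 0 := by
    intro θ'
    ext i a
    by_contra hne
    have := hMpow θ' N i a hne
    have := i.isLt
    omega
  -- Neumann series identities
  have hc1 : ∀ θ', cM θ' = 1 + M θ' * cM θ' := by
    intro θ'
    have e1 : ∑ n ∈ Finset.range (N + 1), (M θ') ^ n = cM θ' + (M θ') ^ N :=
      Finset.sum_range_succ _ N
    have e2 : ∑ n ∈ Finset.range (N + 1), (M θ') ^ n
        = (∑ n ∈ Finset.range N, (M θ') ^ (n + 1)) + (M θ') ^ 0 :=
      Finset.sum_range_succ' _ N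
    have e3 : M θ' * cM θ' = ∑ n ∈ Finset.range N, (M θ') ^ (n + 1) := by
      rw [hcM, Finset.mul_sum]
      exact Finset.sum_congr rfl fun n _ => (pow_succ' _ _).symm
    rw [hMN θ', add_zero] at e1
    rw [pow_zero] at e2
    rw [e3, ← e1, e2, add_comm]
  have hc2 : ∀ θ', cM θ' = 1 + cM θ' * M θ' := by
    intro θ'
    have e1 : ∑ n ∈ Finset.range (N + 1), (M θ') ^ n = cM θ' + (M θ') ^ N :=
      Finset.sum_range_succ _ N
    have e2 : ∑ n ∈ Finset.range (N + 1), (M θ') ^ n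
        = (∑ n ∈ Finset.range N, (M θ') ^ (n + 1)) + (M θ') ^ 0 :=
      Finset.sum_range_succ' _ N
    have e3 : cM θ' * M θ' = ∑ n ∈ Finset.range N, (M θ') ^ (n + 1) := by
      rw [hcM, Finset.sum_mul]
      exact Finset.sum_congr rfl fun n _ => (pow_succ _ _).symm
    rw [hMN θ', add_zero] at e1
    rw [pow_zero] at e2
    rw [e3, ← e1, e2, add_comm]
  -- entrywise versions
  have hc1e : ∀ θ' (i a : Fin N),
      cM θ' i a = (if i = a then (1:ℝ) else 0) + ∑ b, M θ' i b * cM θ' b a := by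
    intro θ' i a
    conv_lhs => rw [hc1 θ']
    simp [Matrix.add_apply, Matrix.mul_apply, Matrix.one_apply]
  have hc2e : ∀ θ' (i a : Fin N),
      cM θ' i a = (if i = a then (1:ℝ) else 0) + ∑ b, cM θ' i b * M θ' b a := by
    intro θ' i a
    conv_lhs => rw [hc2 θ']
    simp [Matrix.add_apply, Matrix.mul_apply, Matrix.one_apply]
  -- locality of v
  have hloc : ∀ (n : ℕ) (hn : n < N) (θ1 θ2 : EuclideanSpace ℝ (Fin N × Fin N)),
      (∀ a b : Fin N, a.val ≤ n → θ1 (a, b) = θ2 (a, b)) →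
      v θ1 ⟨n, hn⟩ = v θ2 ⟨n, hn⟩ := by
    intro n
    induction n using Nat.strong_induction_on with
    | _ n IH =>
      intro hn θ1 θ2 hag
      by_cases h0 : n = 0
      · subst h0
        rw [hv0 θ1, hv0 θ2]
      · have hne : (⟨n, hn⟩ : Fin N) ≠ ⟨0, hz⟩ := Fin.ne_of_val_ne h0
        rw [hv θ1 _ hne, hv θ2 _ hne]
        congr 1
        funext k
        have hklt : k.1.val < n := hadj _ _ k.2
        have h1 : θ1 (⟨n, hn⟩, k.1) = θ2 (⟨n, hn⟩, k.1) := hag _ _ le_rfl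
        have h2 : v θ1 k.1 = v θ2 k.1 := by
          have := IH k.1.val hklt k.1.isLt θ1 θ2
            (fun a b hab => hag a b (by omega))
          simpa using this
        rw [h1, h2]
  -- identification of ebar with the Neumann series
  have hMtop : ∀ θ' (k : Fin N), M θ' k ⟨N - 1, by omega⟩ = 0 := by
    intro θ' k
    by_cases h : adj k ⟨N - 1, by omega⟩
    · have := hadj _ _ h
      have hk := k.isLt
      have : N - 1 < k.val := this
      omega
    · exact dif_neg h
  have hebarc : ∀ (m : ℕ) (a : Fin N), N - 1 - a.val = m →
      ebar θ0 a = cM θ0 ⟨N - 1, by omega⟩ a := by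
    intro m
    induction m using Nat.strong_induction_on with
    | _ m IH =>
      intro a ha
      by_cases htop : a = ⟨N - 1, by omega⟩
      · rw [htop, hebarN θ0, hc2e θ0, if_pos rfl]
        rw [Finset.sum_eq_zero fun b _ => by rw [hMtop θ0 b, mul_zero]]
        rw [add_zero]
      · have haval : a.val < N - 1 := by
          have := a.isLt
          rcases Nat.lt_or_ge a.val (N - 1) with h | h
          · exact h
          · exfalso; exact htop (Fin.ext (show a.val = N - 1 by omega))
        rw [hebar θ0 a htop]
        have hsum : ∀ i : Fin N, e θ0 i a = cM θ0 ⟨N - 1, by omega⟩ i * M θ0 i a := by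
          intro i
          by_cases h : adj i a
          · have hia : a.val < i.val := hadj _ _ h
            have hI : ebar θ0 i = cM θ0 ⟨N - 1, by omega⟩ i := by
              apply IH (N - 1 - i.val) (by omega) i rfl
            rw [he θ0 i a, dif_pos h, hI, hMval θ0 i a h]
          · rw [he θ0 i a, dif_neg h, hMval0 θ0 i a h, mul_zero]
        rw [Finset.sum_congr rfl fun i _ => hsum i]
        rw [hc2e θ0 ⟨N - 1, by omega⟩ a, if_neg (by exact fun hh => htop (by rw [← hh]))]
        rw [zero_add]
  -- the main induction : differentiability and gradient of each node value
  have main : ∀ (n : ℕ) (hn : n < N) (θ' : EuclideanSpace ℝ (Fin N × Fin N)),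
      HasGradientAt (fun θ2 => v θ2 ⟨n, hn⟩)
        (show EuclideanSpace ℝ (Fin N × Fin N) from
          WithLp.toLp 2 (fun p : Fin N × Fin N => M θ' p.1 p.2 * cM θ' ⟨n, hn⟩ p.1)) θ' := by
    intro n
    induction n using Nat.strong_induction_on with
    | _ n IH =>
      intro hn θ1
      by_cases h0 : n = 0
      · subst h0
        have hval : (fun θ2 : EuclideanSpace ℝ (Fin N × Fin N) => v θ2 ⟨0, hn⟩)
            = fun _ => (0:ℝ) := funext fun θ2 => hv0 θ2
        have hgrad : (show EuclideanSpace ℝ (Fin N × Fin N) from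
            WithLp.toLp 2 (fun p : Fin N × Fin N => M θ1 p.1 p.2 * cM θ1 ⟨0, hn⟩ p.1)) = 0 := by
          ext p
          show M θ1 p.1 p.2 * cM θ1 ⟨0, hn⟩ p.1 = (0:ℝ)
          by_cases hp : p.1 = ⟨0, hn⟩
          · have hM0 : M θ1 p.1 p.2 = 0 := by
              by_cases h : adj p.1 p.2
              · have h2 := hadj _ _ h
                rw [hp] at h2
                exact absurd h2 (by simp [Fin.lt_def])
              · exact hMval0 θ1 p.1 p.2 h
            rw [hM0, zero_mul]
          · have hcz : cM θ1 ⟨0, hn⟩ p.1 = 0 := by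
              rw [hc1e θ1, if_neg (fun hh => hp (by rw [← hh]))]
              rw [zero_add, Finset.sum_eq_zero]
              intro b _
              have hM0 : M θ1 ⟨0, hn⟩ b = 0 := by
                by_cases h : adj ⟨0, hn⟩ b
                · have h2 := hadj _ _ h
                  exact absurd h2 (by simp [Fin.lt_def])
                · exact hMval0 θ1 _ b h
              rw [hM0, zero_mul]
            rw [hcz, mul_zero]
        rw [hval, hgrad]
        exact hasGradientAt_const θ1 0
      · -- the inductive step
        have hne : (⟨n, hn⟩ : Fin N) ≠ ⟨0, hz⟩ := Fin.ne_of_val_ne h0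
        -- derivative of each parent's value function
        have hpder : ∀ j : {j : Fin N // adj ⟨n, hn⟩ j},
            HasFDerivAt (fun θ2 => v θ2 j.1)
              (InnerProductSpace.toDual ℝ (EuclideanSpace ℝ (Fin N × Fin N))
                (show EuclideanSpace ℝ (Fin N × Fin N) from
                  WithLp.toLp 2 (fun p : Fin N × Fin N => M θ1 p.1 p.2 * cM θ1 j.1 p.1))) θ1 := by
          intro j
          have hjlt : j.1.val < n := hadj _ _ j.2
          exact IH j.1.val hjlt j.1.isLt θ1
        -- derivative of the input map
        have hX : HasFDerivAt
            (fun θ2 => (fun j : {j : Fin N // adj ⟨n, hn⟩ j} =>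
              θ2 ((⟨n, hn⟩ : Fin N), j.1) + v θ2 j.1))
            (ContinuousLinearMap.pi (fun j : {j : Fin N // adj ⟨n, hn⟩ j} =>
              PiLp.proj 2 (fun _ : Fin N × Fin N => ℝ) ((⟨n, hn⟩ : Fin N), j.1)
              + InnerProductSpace.toDual ℝ (EuclideanSpace ℝ (Fin N × Fin N))
                (show EuclideanSpace ℝ (Fin N × Fin N) from
                  WithLp.toLp 2 (fun p : Fin N × Fin N => M θ1 p.1 p.2 * cM θ1 j.1 p.1)))) θ1 := by
          apply hasFDerivAt_pi.2
          intro j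
          exact (PiLp.proj 2 (fun _ : Fin N × Fin N => ℝ)
            ((⟨n, hn⟩ : Fin N), j.1)).hasFDerivAt.add (hpder j)
        -- a maximizer exists at every input point
        have hex : ∀ y : {j : Fin N // adj ⟨n, hn⟩ j} → ℝ,
            ∃ qy ∈ stdSimplex ℝ {j : Fin N // adj ⟨n, hn⟩ j},
              IsMaxOn (fun p => (∑ j, p j * y j) - Ω ⟨n, hn⟩ p)
                (stdSimplex ℝ {j : Fin N // adj ⟨n, hn⟩ j}) qy := by
          intro y
          set θy : EuclideanSpace ℝ (Fin N × Fin N) :=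
            WithLp.toLp 2 (fun pp : Fin N × Fin N =>
              if h : pp.1 = ⟨n, hn⟩ ∧ adj ⟨n, hn⟩ pp.2
              then y ⟨pp.2, h.2⟩ - v θ1 pp.2 else θ1 pp) with hθy
          have hagree : ∀ b : Fin N, b.val < n → v θy b = v θ1 b := by
            intro b hb
            exact hloc b.val b.isLt θy θ1 (fun a c hac =>
              dif_neg (fun hcon => by
                have : a.val = n := congrArg Fin.val hcon.1
                omega))
          have hxy : ∀ j : {j : Fin N // adj ⟨n, hn⟩ j},
              θy ((⟨n, hn⟩ : Fin N), j.1) + v θy j.1 = y j := by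
            intro j
            have h1 : θy ((⟨n, hn⟩ : Fin N), j.1) = y ⟨j.1, j.2⟩ - v θ1 j.1 :=
              dif_pos ⟨rfl, j.2⟩
            have h2 : v θy j.1 = v θ1 j.1 := hagree j.1 (hadj _ _ j.2)
            rw [h1, h2]
            have h3 : (⟨j.1, j.2⟩ : {j : Fin N // adj ⟨n, hn⟩ j}) = j := rfl
            rw [h3]
            ring
          refine ⟨q θy ⟨n, hn⟩, hqmem θy ⟨n, hn⟩ hne, ?_⟩
          have h := hqmax θy ⟨n, hn⟩ hne
          simp only [hxy] at h
          exact h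
        -- Fréchet derivative of the smoothed max at the current input
        have hfd := aux_smax_fderiv (Ω ⟨n, hn⟩) μ hμ (hsc ⟨n, hn⟩)
          (fun j => θ1 ((⟨n, hn⟩ : Fin N), j.1) + v θ1 j.1) (q θ1 ⟨n, hn⟩)
          (hqmem θ1 ⟨n, hn⟩ hne) (hqmax θ1 ⟨n, hn⟩ hne) hex
        have hcomp := hfd.comp θ1 hX
        have hfun : (fun θ2 => v θ2 (⟨n, hn⟩ : Fin N))
            = fun θ2 => smaxF (Ω ⟨n, hn⟩)
                (fun j => θ2 ((⟨n, hn⟩ : Fin N), j.1) + v θ2 j.1) :=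
          funext fun θ2 => hv θ2 ⟨n, hn⟩ hne
        rw [hasGradientAt_iff_hasFDerivAt, hfun]
        refine HasFDerivAt.congr_fderiv hcomp ?_
        -- identify the two continuous linear maps
        apply ContinuousLinearMap.ext
        intro w
        simp only [ContinuousLinearMap.comp_apply, ContinuousLinearMap.sum_apply,
          ContinuousLinearMap.smul_apply, ContinuousLinearMap.proj_apply,
          ContinuousLinearMap.pi_apply, ContinuousLinearMap.add_apply,
          PiLp.proj_apply, InnerProductSpace.toDual_apply_apply, PiLp.inner_apply,
          RCLike.inner_apply, conj_trivial, smul_eq_mul]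
        simp only [mul_comm (WithLp.ofLp w _)]
        -- now a purely algebraic identity about finite sums
        have hsub : ∀ (F : Fin N → ℝ),
            ∑ j : {j : Fin N // adj ⟨n, hn⟩ j}, q θ1 ⟨n, hn⟩ j * F j.1
              = ∑ b : Fin N, M θ1 ⟨n, hn⟩ b * F b := by
          intro F
          rw [show (∑ j : {j : Fin N // adj ⟨n, hn⟩ j}, q θ1 ⟨n, hn⟩ j * F j.1)
              = ∑ j : {j : Fin N // adj ⟨n, hn⟩ j},
                  (fun b h => q θ1 ⟨n, hn⟩ ⟨b, h⟩ * F b) j.1 j.2 from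
            Finset.sum_congr rfl fun j _ => rfl]
          rw [← aux_sum_dite (P := adj ⟨n, hn⟩) (fun b h => q θ1 ⟨n, hn⟩ ⟨b, h⟩ * F b)]
          refine Finset.sum_congr rfl fun b _ => ?_
          by_cases h : adj ⟨n, hn⟩ b
          · rw [dif_pos h, hMval θ1 ⟨n, hn⟩ b h]
          · rw [dif_neg h, hMval0 θ1 ⟨n, hn⟩ b h, zero_mul]
        rw [hsub (fun b => w ((⟨n, hn⟩ : Fin N), b)
          + ∑ p : Fin N × Fin N, M θ1 p.1 p.2 * cM θ1 b p.1 * w p)]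
        -- expand cM via the Neumann identity on the left side
        have hL : ∑ p : Fin N × Fin N, M θ1 p.1 p.2 * cM θ1 ⟨n, hn⟩ p.1 * w p
            = (∑ b : Fin N, M θ1 ⟨n, hn⟩ b * w ((⟨n, hn⟩ : Fin N), b))
              + ∑ b : Fin N, M θ1 ⟨n, hn⟩ b
                  * ∑ p : Fin N × Fin N, M θ1 p.1 p.2 * cM θ1 b p.1 * w p := by
          have e1 : ∀ p : Fin N × Fin N,
              M θ1 p.1 p.2 * cM θ1 ⟨n, hn⟩ p.1 * w p
                = (if (⟨n, hn⟩ : Fin N) = p.1 then M θ1 p.1 p.2 * w p else 0)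
                  + ∑ b : Fin N, M θ1 ⟨n, hn⟩ b * (M θ1 p.1 p.2 * cM θ1 b p.1 * w p) := by
            intro p
            rw [hc1e θ1 ⟨n, hn⟩ p.1]
            have hS : M θ1 p.1 p.2 * (∑ b : Fin N, M θ1 ⟨n, hn⟩ b * cM θ1 b p.1) * w p
                = ∑ b : Fin N, M θ1 ⟨n, hn⟩ b * (M θ1 p.1 p.2 * cM θ1 b p.1 * w p) := by
              rw [Finset.mul_sum, Finset.sum_mul]
              exact Finset.sum_congr rfl fun b _ => by ring
            by_cases hip : (⟨n, hn⟩ : Fin N) = p.1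
            · rw [if_pos hip, if_pos hip, ← hS]
              ring
            · rw [if_neg hip, if_neg hip, ← hS]
              ring
          rw [Finset.sum_congr rfl fun p _ => e1 p, Finset.sum_add_distrib]
          congr 1
          · rw [Fintype.sum_prod_type]
            rw [Finset.sum_eq_single (⟨n, hn⟩ : Fin N)]
            · exact Finset.sum_congr rfl fun y _ => if_pos rfl
            · intro a _ hne2
              exact Finset.sum_eq_zero fun y _ => if_neg (fun hh => hne2 hh.symm)
            · intro habs
              exact absurd (Finset.mem_univ _) habs
          · rw [Finset.sum_comm]
            exact Finset.sum_congr rfl fun b _ => by rw [Finset.mul_sum]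
        rw [hL, ← Finset.sum_add_distrib]
        exact Finset.sum_congr rfl fun b _ => mul_add _ _ _
  have hfinal : (show EuclideanSpace ℝ (Fin N × Fin N) from WithLp.toLp 2 (fun p : Fin N × Fin N => e θ0 p.1 p.2))
      = (show EuclideanSpace ℝ (Fin N × Fin N) from
          WithLp.toLp 2 (fun p : Fin N × Fin N => M θ0 p.1 p.2 * cM θ0 ⟨N - 1, by omega⟩ p.1)) := by
    ext p
    show e θ0 p.1 p.2 = M θ0 p.1 p.2 * cM θ0 ⟨N - 1, by omega⟩ p.1
    rw [he θ0 p.1 p.2]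
    by_cases h : adj p.1 p.2
    · rw [dif_pos h, hebarc (N - 1 - p.1.val) p.1 rfl, hMval θ0 p.1 p.2 h]
      ring
    · rw [dif_neg h, hMval0 θ0 p.1 p.2 h, zero_mul]
  rw [hfinal]
  exact main (N - 1) (by omega) θ0
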